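/- Define s₃(λ₀) = (1/3)·(1 − 2λ₀ + 3λ₀² − λ₀³). Then (1/2)·(−2λ₀ + λ₀²) + √(s₃(λ₀)) > 0 for every λ₀ ∈ [−1, 1]. -/
import Mathlib

noncomputable def s₃ (l₀ : ℝ) : ℝ := (1/3) * (1 - 2*l₀ + 3*l₀^2 - l₀^3)

theorem first_order_coeff_pos (l₀ : ℝ) (hl : l₀ ∈ Set.Icc (-1:ℝ) 1) :
    0 < (1/2) * (-2*l₀ + l₀^2) + Real.sqrt (s₃ l₀) := by
  obtain ⟨h1, h2⟩ := hl
  set a : ℝ := (1/2) * (-2*l₀ + l₀^2) with ha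
  have hkey : a^2 < s₃ l₀ := by
    rw [ha, s₃]
    nlinarith [mul_nonneg (sub_nonneg.2 h2) (sq_nonneg (l₀ - 3/4)),
      mul_nonneg (by linarith : (0:ℝ) ≤ 1 + l₀) (sq_nonneg (l₀ - 3/4)),
      mul_nonneg (sub_nonneg.2 h2) (sq_nonneg (1 + l₀)),
      mul_nonneg (by linarith : (0:ℝ) ≤ 1 + l₀) (sq_nonneg (1 - l₀)),
      sq_nonneg (l₀ - 3/4), sq_nonneg (l₀^2 - 1)]
  have h3 : |a| < Real.sqrt (s₃ l₀) := by
    have := Real.sqrt_lt_sqrt (sq_nonneg a) hkey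
    rwa [Real.sqrt_sq_eq_abs] at this
  have := neg_abs_le a
  linarith
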